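/- Let E = ℝⁿ, let 0 ≤ L < 1, and let p, q ∈ E. Then ‖p − q‖ ≤ L‖q‖ if and only if ‖(1 − L²)·q − p‖ ≤ L‖p‖. -/

import Mathlib

/-! Squaring both inequalities, the two squared defects
`‖p - q‖² - L²‖q‖²` and `‖(1 - L²) q - p‖² - L²‖p‖²` differ exactly by the factor `1 - L² > 0`,
so they have the same sign. -/

theorem norm_one_sub_smul_sub_sq_sub_mul_norm_sq {E : Type*} [SeminormedAddCommGroup E]
    [InnerProductSpace ℝ E] (c : ℝ) (p q : E) :
    ‖(1 - c) • q - p‖ ^ 2 - c * ‖p‖ ^ 2 = (1 - c) * (‖p - q‖ ^ 2 - c * ‖q‖ ^ 2) := by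
  rw [norm_sub_sq_real, norm_sub_sq_real, real_inner_smul_left, norm_smul, mul_pow,
    Real.norm_eq_abs, sq_abs, real_inner_comm q p]
  ring

theorem inverse_residual_rescaling_identity
    (n : ℕ) (L : ℝ) (hL0 : 0 ≤ L) (hL1 : L < 1)
    (p q : EuclideanSpace ℝ (Fin n)) :
    ‖p - q‖ ≤ L * ‖q‖ ↔ ‖(1 - L ^ 2) • q - p‖ ≤ L * ‖p‖ := by
  have hscale : 0 < 1 - L ^ 2 := by nlinarith
  rw [← sq_le_sq₀ (norm_nonneg _) (by positivity), ← sq_le_sq₀ (norm_nonneg _) (by positivity),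
    mul_pow, mul_pow, ← sub_nonpos, ← sub_nonpos (a := ‖_‖ ^ 2),
    norm_one_sub_smul_sub_sq_sub_mul_norm_sq]
  exact (smul_nonpos_iff_nonpos_of_pos_left hscale).symm
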